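/- The Gaussian f₀(x) = 2 e^{-(x₁²+x₂²)/θ} is an idempotent for the Moyal product on ℝ²: f₀ ⋆ f₀ = f₀. -/

import Mathlib

open MeasureTheory

/-- The Moyal star product on `ℝ²` with deformation parameter `θ`:
`(f ⋆ g)(x) = (πθ)⁻² ∫∫ f(x+v) g(x+w) e^{(2i/θ)(v₁w₂ − v₂w₁)} dv dw`. -/
noncomputable def moyalTheta (θ : ℝ) (f g : (Fin 2 → ℝ) → ℂ) : (Fin 2 → ℝ) → ℂ := fun x =>
  (((Real.pi * θ) ^ 2 : ℝ) : ℂ)⁻¹ *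
    ∫ v : Fin 2 → ℝ, ∫ w : Fin 2 → ℝ,
      f (x + v) * g (x + w) *
        Complex.exp ((2 * Complex.I / (θ : ℂ)) * ((v 0 * w 1 - v 1 * w 0 : ℝ) : ℂ))

/-!
Both integrations in `f₀ ⋆ f₀` are Gaussian integrals with a complex linear term,
`∫ exp (b‖v‖² + c·v + d) dv = (π / -b) exp (d - c·c / 4b)`, which split over the two
coordinates. Integrating out `w` leaves a Gaussian in `v` with `b = -2/θ` whose complex linear
coefficient `c` is isotropic, `c·c = 0`; so the second integration only produces the constant
`πθ/2`, and together with the first one's `πθ` and the factor `4` this cancels `(πθ)⁻²` up to `2`.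
-/

open Complex Real

theorem integral_cexp_quadratic_pi {ι : Type*} [Fintype ι] {b : ℂ} (hb : b.re < 0)
    (c : ι → ℂ) (d : ℂ) :
    ∫ x : ι → ℝ, cexp (b * ∑ i, (x i : ℂ) ^ 2 + ∑ i, c i * x i + d) =
      ((π / -b) ^ (1 / 2 : ℂ)) ^ Fintype.card ι * cexp (d - (∑ i, c i ^ 2) / (4 * b)) := by
  have split (x : ι → ℝ) : cexp (b * ∑ i, (x i : ℂ) ^ 2 + ∑ i, c i * x i + d) =
      cexp d * ∏ i, cexp (b * (x i : ℂ) ^ 2 + c i * x i + 0) := by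
    rw [← Complex.exp_sum, ← Complex.exp_add, Finset.mul_sum, ← Finset.sum_add_distrib]
    simp only [add_zero]
    ring_nf
  simp_rw [split]
  rw [integral_const_mul,
    integral_fintype_prod_volume_eq_prod (fun i (t : ℝ) => cexp (b * (t : ℂ) ^ 2 + c i * t + 0))]
  simp only [integral_cexp_quadratic hb, Finset.prod_mul_distrib, Finset.prod_const,
    ← Complex.exp_sum, Finset.card_univ]
  rw [mul_left_comm, ← Complex.exp_add, Finset.sum_div]
  congr 2
  simp only [zero_sub, Finset.sum_neg_distrib]
  ring

theorem integral_cexp_quadratic_fin_two {b : ℂ} (hb : b.re < 0) (c₀ c₁ d : ℂ) :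
    ∫ x : Fin 2 → ℝ, cexp (b * ((x 0 : ℂ) ^ 2 + (x 1 : ℂ) ^ 2) + (c₀ * x 0 + c₁ * x 1) + d) =
      π / -b * cexp (d - (c₀ ^ 2 + c₁ ^ 2) / (4 * b)) := by
  simpa [Fin.sum_univ_two, cpow_ofNat_inv_pow] using
    integral_cexp_quadratic_pi hb ![c₀, c₁] d

theorem moyal_gaussian_inner_integral {θ : ℝ} (hθ : 0 < θ) (x v : Fin 2 → ℝ) :
    ∫ w : Fin 2 → ℝ, ((2 * Real.exp (-((x + v) 0 ^ 2 + (x + v) 1 ^ 2) / θ) : ℝ) : ℂ) *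
        ((2 * Real.exp (-((x + w) 0 ^ 2 + (x + w) 1 ^ 2) / θ) : ℝ) : ℂ) *
        cexp ((2 * I / (θ : ℂ)) * ((v 0 * w 1 - v 1 * w 0 : ℝ) : ℂ)) =
      4 * (π * θ) * cexp (-(2 / θ) * ((v 0 : ℂ) ^ 2 + (v 1 : ℂ) ^ 2) +
        (-2 * (x 0 + I * x 1) / θ * v 0 + -2 * (x 1 - I * x 0) / θ * v 1) +
        -((x 0 : ℂ) ^ 2 + (x 1 : ℂ) ^ 2) / θ) := by
  have hθ₀ : (θ : ℂ) ≠ 0 := ofReal_ne_zero.mpr hθ.ne'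
  have hb : (-(1 / θ : ℂ)).re < 0 := by norm_num [div_re]; positivity
  calc _ = ∫ w : Fin 2 → ℝ, 4 * cexp (-(1 / θ) * ((w 0 : ℂ) ^ 2 + (w 1 : ℂ) ^ 2) +
          (-2 * (x 0 + I * v 1) / θ * w 0 + -2 * (x 1 - I * v 0) / θ * w 1) +
          -((x 0 + v 0 : ℂ) ^ 2 + (x 1 + v 1 : ℂ) ^ 2 + (x 0 : ℂ) ^ 2 + (x 1 : ℂ) ^ 2) / θ) := by
        congr 1 with w
        push_cast [Pi.add_apply]
        rw [mul_mul_mul_comm, ← Complex.exp_add, mul_assoc, ← Complex.exp_add]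
        norm_num
        congr 1
        ring
    _ = _ := by
        rw [integral_const_mul, integral_cexp_quadratic_fin_two hb, mul_assoc (4 : ℂ)]
        congr 2
        · field_simp
        · congr 1
          field_simp
          linear_combination (4 * ((v 0 : ℂ) ^ 2 + (v 1 : ℂ) ^ 2)) * I_sq

/-- The Gaussian `f₀(x) = 2 e^{-(x₁²+x₂²)/θ}` is an idempotent for the Moyal product:
`f₀ ⋆ f₀ = f₀`. -/
theorem gaussian_idempotent (θ : ℝ) (hθ : 0 < θ) :
    moyalTheta θ (fun x => (2 * Real.exp (-(x 0 ^ 2 + x 1 ^ 2) / θ) : ℝ))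
        (fun x => (2 * Real.exp (-(x 0 ^ 2 + x 1 ^ 2) / θ) : ℝ)) =
      fun x => ((2 * Real.exp (-(x 0 ^ 2 + x 1 ^ 2) / θ) : ℝ) : ℂ) := by
  have hθ₀ : (θ : ℂ) ≠ 0 := ofReal_ne_zero.mpr hθ.ne'
  have hb : (-(2 / θ : ℂ)).re < 0 := by norm_num [div_re]; positivity
  funext x
  have isotropic : (-2 * (x 0 + I * x 1) / θ) ^ 2 + (-2 * (x 1 - I * x 0) / θ) ^ 2 = 0 := by
    field_simp
    linear_combination (4 * ((x 0 : ℂ) ^ 2 + (x 1 : ℂ) ^ 2)) * I_sq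
  simp only [moyalTheta, moyal_gaussian_inner_integral hθ]
  rw [integral_const_mul, integral_cexp_quadratic_fin_two hb, isotropic, zero_div, sub_zero]
  push_cast
  field_simp
  norm_num
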